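/- arXiv:2508.20731 — 9 statements merged into one kernel-verified Lean document; each statement's English description precedes it below -/
import Mathlib

section
/- Let G be a finite group acting transitively on a finite set Ω with |Ω| = n ≥ 2, and let α ∈ Ω be a point whose stabiliser G_α has order s. Then, as real numbers, m(G) ≥ 1/(2s) + √(n − 1/s + 1/(4s²)). -/
open Pointwise

/-- A subset `A` of `Ω` is *non-self-separable* for the action of `G` if every translate
`g • A` meets `A`. -/
def NonSelfSep (G : Type*) [Group G] {Ω : Type*} [MulAction G Ω] (A : Set Ω) : Prop :=
  ∀ g : G, (A ∩ g • A).Nonempty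

/-- `mParam G Ω` is the minimum cardinality of a non-self-separable subset of `Ω`. -/
noncomputable def mParam (G Ω : Type*) [Group G] [MulAction G Ω] : ℕ :=
  sInf {k | ∃ A : Set Ω, A.ncard = k ∧ NonSelfSep G A}

section Aux
variable {G : Type*} [Group G] [Fintype G] {Ω : Type*} [Fintype Ω]
  [MulAction G Ω] [MulAction.IsPretransitive G Ω] [DecidableEq Ω] [DecidableEq G]

open MulAction Finset

lemma stab_card (a b : Ω) :
    Nat.card (stabilizer G a) = Nat.card (stabilizer G b) := by
  classical
  have h1 := MulAction.card_orbit_mul_card_stabilizer_eq_card_group G a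
  have h2 := MulAction.card_orbit_mul_card_stabilizer_eq_card_group G b
  have ho : ∀ c : Ω, Fintype.card (orbit G c) = Fintype.card Ω := fun c =>
    Fintype.card_congr ((Equiv.setCongr (MulAction.orbit_eq_univ G c)).trans (Equiv.Set.univ Ω))
  rw [ho] at h1 h2
  have hΩ : 0 < Fintype.card Ω := Fintype.card_pos_iff.mpr ⟨a⟩
  simp only [Nat.card_eq_fintype_card]
  exact Nat.eq_of_mul_eq_mul_left hΩ (h1.trans h2.symm)

lemma transporter_card (a b : Ω) :
    (Finset.univ.filter (fun g : G => g • a = b)).card = Nat.card (stabilizer G a) := by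
  classical
  obtain ⟨g₀, hg₀⟩ := MulAction.exists_smul_eq G a b
  have : Finset.univ.filter (fun g : G => g • a = b) =
      (Finset.univ.filter (fun g : G => g • a = a)).image (fun h => g₀ * h) := by
    ext g
    simp only [mem_filter, mem_univ, true_and, mem_image]
    constructor
    · intro hg
      exact ⟨g₀⁻¹ * g, by rw [mul_smul, hg, inv_smul_eq_iff, hg₀], by group⟩
    · rintro ⟨h, hh, rfl⟩
      rw [mul_smul, hh, hg₀]
  rw [this, Finset.card_image_of_injective _ (mul_right_injective g₀)]
  rw [Nat.card_eq_fintype_card, Fintype.card_subtype]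
  congr 1

end Aux

/-- For a finite group `G` acting transitively on a finite set `Ω`
with `|Ω| = n ≥ 2` and point stabiliser of order `s`,
`m(G) ≥ 1/(2s) + √(n − 1/s + 1/(4s²))`. -/
theorem stmt0 (G : Type*) [Group G] [Finite G] (Ω : Type*) [Fintype Ω]
    [MulAction G Ω] [MulAction.IsPretransitive G Ω]
    (n : ℕ) (hn : Fintype.card Ω = n) (h2 : 2 ≤ n)
    (α : Ω) (s : ℕ) (hs : s = Nat.card (MulAction.stabilizer G α)) :
    1 / (2 * (s : ℝ)) + Real.sqrt ((n : ℝ) - 1 / (s : ℝ) + 1 / (4 * (s : ℝ) ^ 2))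
      ≤ (mParam G Ω : ℝ) := by
  classical
  haveI := Fintype.ofFinite G
  haveI : Nonempty Ω := Fintype.card_pos_iff.mp (by omega)
  -- the defining set of `mParam` is nonempty, so the infimum is attained
  have hne : {k | ∃ A : Set Ω, A.ncard = k ∧ NonSelfSep G A}.Nonempty := by
    refine ⟨(Set.univ : Set Ω).ncard, Set.univ, rfl, fun g => ?_⟩
    have hu : (g • (Set.univ : Set Ω)) = Set.univ := by
      ext x; simp [Set.mem_smul_set_iff_inv_smul_mem]
    rw [hu, Set.inter_univ]
    exact Set.univ_nonempty
  obtain ⟨A, hA0, hsep⟩ := Nat.sInf_mem hne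
  have hA : A.ncard = mParam G Ω := hA0
  set m := mParam G Ω with hm
  have hs1 : 1 ≤ s := by
    rw [hs]
    exact Nat.one_le_iff_ne_zero.mpr (Nat.card_pos (α := MulAction.stabilizer G α)).ne'
  -- Finset version of A
  set F : Finset Ω := A.toFinset with hF
  have hFA : ∀ x, x ∈ F ↔ x ∈ A := fun x => Set.mem_toFinset
  have hFcard : F.card = m := by rw [← hA, Set.ncard_eq_toFinset_card']
  set N : G → ℕ := fun g => (F.filter (fun b => g⁻¹ • b ∈ F)).card with hN
  have hNpos : ∀ g, 1 ≤ N g := by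
    intro g
    obtain ⟨b, hb1, hb2⟩ := hsep g
    rw [Set.mem_smul_set_iff_inv_smul_mem] at hb2
    exact Finset.card_pos.mpr ⟨b, Finset.mem_filter.mpr ⟨(hFA b).mpr hb1, (hFA _).mpr hb2⟩⟩
  have hN1 : N 1 = m := by
    rw [hN]
    simp only []
    rw [Finset.filter_true_of_mem (fun b hb => by simpa using hb), hFcard]
  -- each summand counted by pairs
  have hNg : ∀ g : G, N g = ((F ×ˢ F).filter (fun p => g • p.1 = p.2)).card := by
    intro g
    refine Finset.card_bij' (fun b _ => (g⁻¹ • b, b)) (fun p _ => p.2) ?_ ?_ ?_ ?_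
    · intro b hb
      rw [Finset.mem_filter] at hb
      simp only [Finset.mem_filter, Finset.mem_product]
      exact ⟨⟨hb.2, hb.1⟩, by simp⟩
    · intro p hp
      rw [Finset.mem_filter, Finset.mem_product] at hp
      rw [Finset.mem_filter]
      refine ⟨hp.1.2, ?_⟩
      show g⁻¹ • p.2 ∈ F
      rw [← hp.2]
      simpa using hp.1.1
    · intro b _; rfl
    · intro p hp
      rw [Finset.mem_filter, Finset.mem_product] at hp
      have h' : g⁻¹ • p.2 = p.1 := by rw [← hp.2]; simp
      show (g⁻¹ • p.2, p.2) = p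
      rw [h']
  -- total count
  have hsum : ∑ g : G, N g = F.card * F.card * s := by
    calc ∑ g : G, N g
        = ∑ g : G, ∑ p ∈ F ×ˢ F, (if g • p.1 = p.2 then 1 else 0) := by
          refine Finset.sum_congr rfl fun g _ => ?_
          rw [hNg g, Finset.card_filter]
      _ = ∑ p ∈ F ×ˢ F, ∑ g : G, (if g • p.1 = p.2 then 1 else 0) := Finset.sum_comm
      _ = ∑ p ∈ F ×ˢ F, (Finset.univ.filter (fun g : G => g • p.1 = p.2)).card := by
          refine Finset.sum_congr rfl fun p _ => ?_
          rw [Finset.card_filter]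
      _ = ∑ _p ∈ F ×ˢ F, s := by
          refine Finset.sum_congr rfl fun p _ => ?_
          rw [transporter_card p.1 p.2, stab_card p.1 α, hs]
      _ = F.card * F.card * s := by
          rw [Finset.sum_const, Finset.card_product, smul_eq_mul, mul_assoc]
  -- lower bound on total count
  have hlow : Fintype.card G + m ≤ (∑ g : G, N g) + 1 := by
    have hsplit : N 1 + ∑ g ∈ Finset.univ.erase 1, N g = ∑ g : G, N g :=
      Finset.add_sum_erase _ _ (Finset.mem_univ 1)
    have hrest : (Finset.univ.erase (1 : G)).card ≤ ∑ g ∈ Finset.univ.erase 1, N g := by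
      simpa using Finset.sum_le_sum (fun g (_ : g ∈ Finset.univ.erase 1) => hNpos g)
    have hce : (Finset.univ.erase (1 : G)).card = Fintype.card G - 1 := by
      rw [Finset.card_erase_of_mem (Finset.mem_univ 1), Finset.card_univ]
    have hG1 : 1 ≤ Fintype.card G := Fintype.card_pos
    omega
  -- |G| = n * s
  have hcardG : Fintype.card G = n * s := by
    have h1 := MulAction.card_orbit_mul_card_stabilizer_eq_card_group G α
    have ho : Fintype.card (MulAction.orbit G α) = Fintype.card Ω :=
      Fintype.card_congr ((Equiv.setCongr (MulAction.orbit_eq_univ G α)).trans (Equiv.Set.univ Ω))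
    rw [ho, hn] at h1
    rw [← h1, hs, Nat.card_eq_fintype_card]
  -- the key natural-number inequality
  have hkeyN : n * s + m ≤ m * m * s + 1 := by
    have h := hlow
    rw [hsum, hFcard, hcardG] at h
    exact h
  -- pass to real numbers
  have hm1 : 1 ≤ m := by rw [← hN1]; exact hNpos 1
  have hS : (0 : ℝ) < (s : ℝ) := by exact_mod_cast Nat.cast_pos.mpr (by omega : 0 < s)
  have hSR : (1 : ℝ) ≤ (s : ℝ) := by exact_mod_cast hs1
  have hMR : (1 : ℝ) ≤ (m : ℝ) := by exact_mod_cast hm1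
  have hkeyR : (n : ℝ) * s + m ≤ (m : ℝ) * m * s + 1 := by exact_mod_cast hkeyN
  have e1 : (1 / (s : ℝ)) * s = 1 := div_mul_cancel₀ 1 hS.ne'
  have e2 : ((m : ℝ) / s) * s = m := div_mul_cancel₀ (m : ℝ) hS.ne'
  have key2 : (n : ℝ) - 1 / s ≤ (m : ℝ) ^ 2 - m / s := by
    nlinarith [hkeyR, e1, e2, hS]
  have expand : ((m : ℝ) - 1 / (2 * s)) ^ 2 = (m : ℝ) ^ 2 - m / s + 1 / (4 * s ^ 2) := by
    field_simp
    ring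
  have hXle : (n : ℝ) - 1 / s + 1 / (4 * (s : ℝ) ^ 2) ≤ ((m : ℝ) - 1 / (2 * s)) ^ 2 := by
    rw [expand]; linarith
  have h0 : (0 : ℝ) ≤ (m : ℝ) - 1 / (2 * s) := by
    have : 1 / (2 * (s : ℝ)) ≤ 1 := by
      rw [div_le_one (by linarith)]
      linarith
    linarith
  have hsqrt : Real.sqrt ((n : ℝ) - 1 / s + 1 / (4 * (s : ℝ) ^ 2)) ≤ (m : ℝ) - 1 / (2 * s) := by
    calc Real.sqrt ((n : ℝ) - 1 / s + 1 / (4 * (s : ℝ) ^ 2))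
        ≤ Real.sqrt (((m : ℝ) - 1 / (2 * s)) ^ 2) := Real.sqrt_le_sqrt hXle
      _ = (m : ℝ) - 1 / (2 * s) := Real.sqrt_sq h0
  linarith
end

section
/- Let G be a group acting transitively on a finite set Ω with |Ω| = n ≥ 2. Then m(G)² ≥ n and m(G) ≤ ⌊n/2⌋ + 1 (equivalently, √n ≤ m(G) ≤ ⌈(n+1)/2⌉). -/
/-!
If every translate `g • A` meets `A`, then every group element carries some point of `A` to a
point of `A`, so the group is covered by the `|A|²` transporters `{g | g • b = a}` with
`a, b ∈ A`. For a finite transitive group each transporter is a coset of a point stabilizer and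
has `|G| / n` elements, which gives `n ≤ |A|²`; an arbitrary group is replaced by its finite image
in `Equiv.Perm Ω`. Conversely a set with more than `n / 2` points meets each of its translates,
since both have the same size.
-/

open Pointwise

open MulAction

section Transporter

variable {K Ω : Type*} [Group K] [MulAction K Ω]

def transporterEquivStabilizer {x y : Ω} {k₀ : K} (hk₀ : k₀ • y = x) :
    {k : K // k • y = x} ≃ stabilizer K y where
  toFun k := ⟨k₀⁻¹ * k, by simp [mul_smul, k.2, ← hk₀]⟩
  invFun k := ⟨k₀ * k, by rw [mul_smul, mem_stabilizer_iff.mp k.2, hk₀]⟩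
  left_inv k := by simp
  right_inv k := by simp

lemma card_transporter_mul_card [IsPretransitive K Ω] (x y : Ω) :
    Nat.card {k : K // k • y = x} * Nat.card Ω = Nat.card K := by
  obtain ⟨k₀, hk₀⟩ := exists_smul_eq K y x
  rw [Nat.card_congr (transporterEquivStabilizer hk₀), ← index_stabilizer_of_transitive K y,
    Subgroup.card_mul_index]

end Transporter

section NonSelfSep

variable {G Ω : Type*} [Group G] [MulAction G Ω]

lemma nonSelfSep_univ [Nonempty Ω] : NonSelfSep G (Set.univ : Set Ω) := fun g => by
  simp [Set.smul_set_univ]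

lemma nonSelfSep_of_card_lt_two_mul_ncard [Finite Ω] {A : Set Ω}
    (hA : Nat.card Ω < 2 * A.ncard) : NonSelfSep G A := fun g => by
  have hunion : (A ∪ g • A).ncard ≤ Nat.card Ω := by
    rw [← Set.ncard_univ]
    exact Set.ncard_le_ncard (Set.subset_univ _)
  have hsum := Set.ncard_inter_add_ncard_union A (g • A)
  rw [Set.ncard_smul_set] at hsum
  exact Set.nonempty_of_ncard_ne_zero (by omega)

lemma NonSelfSep.card_le_ncard_sq_of_finite [Finite G] [Finite Ω] [IsPretransitive G Ω]
    {A : Set Ω} (hA : NonSelfSep G A) : Nat.card Ω ≤ A.ncard ^ 2 := by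
  classical
  have : Fintype G := Fintype.ofFinite G
  have : Fintype Ω := Fintype.ofFinite Ω
  set P := A.toFinset ×ˢ A.toFinset
  let T : Ω × Ω → Finset G := fun p => {k | k • p.2 = p.1}
  have hcover : (Finset.univ : Finset G) ⊆ P.biUnion T := by
    intro g _
    obtain ⟨-, haA, b, hbA, rfl⟩ := hA g
    simp only [Finset.mem_biUnion, P, T, Finset.mem_product, Set.mem_toFinset,
      Finset.mem_filter, Finset.mem_univ, true_and]
    exact ⟨(g • b, b), ⟨haA, hbA⟩, rfl⟩
  have hT : ∀ p, (T p).card * Nat.card Ω = Nat.card G := fun p => by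
    rw [← card_transporter_mul_card (K := G) p.1 p.2, Nat.card_eq_fintype_card (α := Subtype _),
      Fintype.card_subtype]
  have key : Nat.card G * Nat.card Ω ≤ A.ncard ^ 2 * Nat.card G :=
    calc Nat.card G * Nat.card Ω
        ≤ (P.biUnion T).card * Nat.card Ω := by
          rw [Nat.card_eq_fintype_card, ← Finset.card_univ]
          gcongr
      _ ≤ (∑ p ∈ P, (T p).card) * Nat.card Ω := by gcongr; exact Finset.card_biUnion_le
      _ = P.card * Nat.card G := by
          rw [Finset.sum_mul, Finset.sum_congr rfl fun p _ => hT p, Finset.sum_const, smul_eq_mul]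
      _ = A.ncard ^ 2 * Nat.card G := by
          rw [Finset.card_product, ← Set.ncard_eq_toFinset_card', sq]
  rw [mul_comm _ (Nat.card G)] at key
  exact Nat.le_of_mul_le_mul_left key Nat.card_pos

lemma NonSelfSep.card_le_ncard_sq [Finite Ω] [IsPretransitive G Ω]
    {A : Set Ω} (hA : NonSelfSep G A) : Nat.card Ω ≤ A.ncard ^ 2 := by
  have : IsPretransitive (toPermHom G Ω).range Ω := ⟨fun x y => by
    obtain ⟨g, hg⟩ := exists_smul_eq G x y
    exact ⟨⟨toPermHom G Ω g, g, rfl⟩, hg⟩⟩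
  refine NonSelfSep.card_le_ncard_sq_of_finite (G := (toPermHom G Ω).range) ?_
  rintro ⟨-, g, rfl⟩
  exact hA g

end NonSelfSep

section mParam

variable (G Ω : Type*) [Group G] [MulAction G Ω]

lemma mParam_le_ncard {A : Set Ω} (hA : NonSelfSep G A) : mParam G Ω ≤ A.ncard :=
  Nat.sInf_le ⟨A, rfl, hA⟩

lemma exists_nonSelfSep_ncard_eq_mParam [Nonempty Ω] :
    ∃ A : Set Ω, A.ncard = mParam G Ω ∧ NonSelfSep G A := by
  have hne : {k | ∃ A : Set Ω, A.ncard = k ∧ NonSelfSep G A}.Nonempty :=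
    ⟨_, Set.univ, rfl, nonSelfSep_univ⟩
  exact Nat.sInf_mem hne

lemma card_le_mParam_sq [Finite Ω] [Nonempty Ω] [IsPretransitive G Ω] :
    Nat.card Ω ≤ mParam G Ω ^ 2 := by
  obtain ⟨A, hAcard, hA⟩ := exists_nonSelfSep_ncard_eq_mParam G Ω
  exact hAcard ▸ hA.card_le_ncard_sq

lemma mParam_le_card_div_two_add_one [Finite Ω] [Nonempty Ω] :
    mParam G Ω ≤ Nat.card Ω / 2 + 1 := by
  have hpos : 0 < Nat.card Ω := Nat.card_pos
  obtain ⟨A, -, hAcard⟩ := Set.exists_subset_card_eq (s := (Set.univ : Set Ω))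
    (n := Nat.card Ω / 2 + 1) (by rw [Set.ncard_univ]; omega)
  calc mParam G Ω ≤ A.ncard := mParam_le_ncard G Ω (nonSelfSep_of_card_lt_two_mul_ncard (by omega))
    _ = Nat.card Ω / 2 + 1 := hAcard

end mParam

/-- For a group `G` acting transitively on a finite set `Ω` with
`|Ω| = n ≥ 2`, one has `√n ≤ m(G) ≤ ⌊n/2⌋ + 1`. -/
theorem stmt1 (G : Type*) [Group G] (Ω : Type*) [Fintype Ω]
    [MulAction G Ω] [MulAction.IsPretransitive G Ω]
    (n : ℕ) (hn : Fintype.card Ω = n) (h2 : 2 ≤ n) :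
    n ≤ mParam G Ω ^ 2 ∧ mParam G Ω ≤ n / 2 + 1 := by
  have : Nonempty Ω := Fintype.card_pos_iff.mp (by omega)
  rw [← hn, ← Nat.card_eq_fintype_card]
  exact ⟨card_le_mParam_sq G Ω, mParam_le_card_div_two_add_one G Ω⟩
end

section
/- Let G be a group acting transitively on a finite set Ω with |Ω| ≥ 2, and let N be a normal subgroup of G whose action on Ω has at least two orbits. Let Ω/N denote the set of N-orbits on Ω, on which G acts by g • (N-orbit of ω) = (N-orbit of g • ω); this action is well defined since N is normal, and it is transitive. Then m(G acting on Ω) ≥ m(G acting on Ω/N). -/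
open Pointwise

variable {G : Type*} [Group G] {Ω : Type*} [MulAction G Ω]

/-- If `N` is normal in `G`, then `g • (N-orbit of ω) = (N-orbit of g • ω)` is a
well-defined action of `G` on the set `Ω/N` of `N`-orbits on `Ω`. -/
instance orbitQuotientAction (N : Subgroup G) [N.Normal] :
    MulAction G (Quotient (MulAction.orbitRel N Ω)) where
  smul g := Quotient.map (fun ω => g • ω) (by
    intro x y (hxy : x ∈ MulAction.orbit N y)
    obtain ⟨⟨m, hm⟩, rfl⟩ := hxy
    show g • m • y ∈ MulAction.orbit N (g • y)
    refine ⟨⟨g * m * g⁻¹, Subgroup.Normal.conj_mem ‹N.Normal› m hm g⟩, ?_⟩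
    show (g * m * g⁻¹) • g • y = g • m • y
    simp [mul_smul])
  one_smul := by
    intro x
    induction x using Quotient.inductionOn with
    | h ω => show Quotient.map _ _ _ = _ ; simp
  mul_smul := by
    intro g h x
    induction x using Quotient.inductionOn with
    | h ω =>
      show Quotient.map _ _ _ = Quotient.map _ _ (Quotient.map _ _ _)
      simp [mul_smul]

/-- Let `G` act transitively on a finite set `Ω` with `|Ω| ≥ 2`, and let
`N ⊴ G` have at least two orbits on `Ω`.  Then `m(G ↷ Ω) ≥ m(G ↷ Ω/N)`. -/
theorem stmt4 (G : Type*) [Group G] (Ω : Type*) [Fintype Ω] [MulAction G Ω]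
    [MulAction.IsPretransitive G Ω] (h2 : 2 ≤ Fintype.card Ω)
    (N : Subgroup G) [N.Normal]
    (horb : ∃ x y : Quotient (MulAction.orbitRel N Ω), x ≠ y) :
    mParam G (Quotient (MulAction.orbitRel N Ω)) ≤ mParam G Ω := by
  classical
  have hΩ : Nonempty Ω := Fintype.card_pos_iff.mp (by omega)
  set S : Set ℕ := {k | ∃ A : Set Ω, A.ncard = k ∧ NonSelfSep G A} with hS
  have hSne : S.Nonempty := by
    refine ⟨(Set.univ : Set Ω).ncard, Set.univ, rfl, ?_⟩
    intro g
    rw [Set.smul_set_univ, Set.univ_inter]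
    exact Set.univ_nonempty
  have hmem : mParam G Ω ∈ S := Nat.sInf_mem hSne
  obtain ⟨A, hA, hns⟩ := hmem
  -- image of A in the quotient
  set π : Ω → Quotient (MulAction.orbitRel N Ω) := Quotient.mk _ with hπ
  have hequi : ∀ (g : G) (x : Ω), π (g • x) = g • π x := fun g x => rfl
  have hns' : NonSelfSep G (π '' A) := by
    intro g
    obtain ⟨x, hxA, hxg⟩ := hns g
    obtain ⟨a, ha, rfl⟩ := hxg
    refine ⟨π (g • a), ⟨g • a, hxA, rfl⟩, ?_⟩
    rw [hequi]
    exact ⟨π a, ⟨a, ha, rfl⟩, rfl⟩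
  calc mParam G (Quotient (MulAction.orbitRel N Ω)) ≤ (π '' A).ncard :=
        Nat.sInf_le ⟨π '' A, rfl, hns'⟩
    _ ≤ A.ncard := Set.ncard_image_le A.toFinite
    _ = mParam G Ω := hA
end

section
/- Let a, b ≥ 2 be integers and let W be the subgroup of the symmetric group of Fin a × Fin b consisting of all permutations that map each block Fin a × {j} onto some block Fin a × {j'} (so W is the imprimitive wreath product Sym(a) ≀ Sym(b) acting on ab points). Then m(W) = a + b − 2 if (a = 3 and b is odd) or (b = 3 and a is odd), and m(W) = a + b − 1 otherwise. -/
/-!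
Cut a set `A` into its sections `s_j = #(A ∩ Fin a × {j})`. If some permutation `σ` of the
blocks has `s_j + s_{σ j} ≤ a` for all `j`, then a block permutation following `σ` and moving
each section off the section it lands on separates `A`. So for non-self-separable `A` every
pairing of the blocks has a pair of sections of total size `> a`; pairing the `i`-th smallest
section with the `i`-th largest bounds `∑ s_j` below by `k u + m v` with `v ≤ u ≤ a < u + v` and
`2k + m = b + 1`, which is at least `a + b - 1` except when `a = 3` and `b` is odd, or `b = 3`
and `a` is odd, where only `a + b - 2` follows.

Conversely, a block together with a line `{x₀} × Fin b` is non-self-separable of size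
`a + b - 1`, since every block meets the line. In the exceptional cases a rectangle `P × H` with
`2 #P > a` and `2 #H > b` of size `a + b - 2` works: some occupied block is mapped to an
occupied block, and there the images of the two copies of `P` must overlap.
-/

open Pointwise

/-- The imprimitive wreath product `Sym(a) ≀ Sym(b)`: the subgroup of the symmetric group
of `Fin a × Fin b` consisting of all permutations mapping each block `Fin a × {j}` onto
some block `Fin a × {j'}`. -/
def blockW (a b : ℕ) : Subgroup (Equiv.Perm (Fin a × Fin b)) where
  carrier := {π | ∀ j : Fin b, ∃ j' : Fin b,
    ⇑π '' {p : Fin a × Fin b | p.2 = j} = {p : Fin a × Fin b | p.2 = j'}}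
  one_mem' := fun j => ⟨j, by simp⟩
  mul_mem' := by
    intro π ρ hπ hρ j
    obtain ⟨j₁, h₁⟩ := hρ j
    obtain ⟨j₂, h₂⟩ := hπ j₁
    exact ⟨j₂, by rw [Equiv.Perm.coe_mul, Set.image_comp, h₁, h₂]⟩
  inv_mem' := by
    intro π hπ j
    rcases Nat.eq_zero_or_pos a with ha | ha
    · subst ha
      exact ⟨j, by simp [Set.eq_empty_of_isEmpty]⟩
    · choose τ hτ using hπ
      have hinj : Function.Injective τ := by
        intro j₁ j₂ h
        have himg : ⇑π '' {p : Fin a × Fin b | p.2 = j₁}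
            = ⇑π '' {p : Fin a × Fin b | p.2 = j₂} := by rw [hτ j₁, hτ j₂, h]
        have hBB := Set.image_injective.mpr π.injective himg
        have hmem : ((⟨0, ha⟩ : Fin a), j₁) ∈ {p : Fin a × Fin b | p.2 = j₁} := rfl
        rw [hBB] at hmem
        exact hmem
      obtain ⟨j₀, hj₀⟩ := Finite.injective_iff_surjective.mp hinj j
      refine ⟨j₀, ?_⟩
      rw [← hj₀, ← hτ j₀, Equiv.Perm.inv_def]
      exact Equiv.symm_image_image π _

open Finset Equiv

def mWreath (a b : ℕ) : ℕ :=
  if (a = 3 ∧ Odd b) ∨ (b = 3 ∧ Odd a) then a + b - 2 else a + b - 1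

theorem exists_perm_forall_apply_notMem {α : Type*} [Fintype α] [DecidableEq α]
    (S T : Finset α) (h : #S + #T ≤ Fintype.card α) : ∃ π : Perm α, ∀ x ∈ S, π x ∉ T := by
  obtain ⟨S', hS'T, hcard⟩ := exists_subset_card_eq (s := Tᶜ) (n := #S)
    (by rw [card_compl]; omega)
  let e : {x // x ∈ S} ≃ {x // x ∈ S'} := equivOfCardEq hcard.symm
  exact ⟨e.extendSubtype, fun x hx => mem_compl.1 (hS'T (e.extendSubtype_mem x hx))⟩

section

variable {a b : ℕ}

def blockPerm (σ : Perm (Fin b)) (π : Fin b → Perm (Fin a)) : Perm (Fin a × Fin b) where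
  toFun p := (π p.2 p.1, σ p.2)
  invFun p := ((π (σ.symm p.2)).symm p.1, σ.symm p.2)
  left_inv p := by simp
  right_inv p := by simp

lemma blockPerm_apply (σ : Perm (Fin b)) (π : Fin b → Perm (Fin a)) (p : Fin a × Fin b) :
    blockPerm σ π p = (π p.2 p.1, σ p.2) := rfl

lemma blockPerm_mem_blockW (σ : Perm (Fin b)) (π : Fin b → Perm (Fin a)) :
    blockPerm σ π ∈ blockW a b := by
  intro j
  refine ⟨σ j, Set.ext fun ⟨x, j'⟩ => ⟨?_, fun h => ⟨((π j).symm x, j), rfl, ?_⟩⟩⟩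
  · rintro ⟨⟨y, _⟩, rfl, h⟩
    exact congrArg Prod.snd h.symm
  · simp_all [blockPerm_apply]

lemma exists_perm_snd_apply (ha : 0 < a) {g : Perm (Fin a × Fin b)} (hg : g ∈ blockW a b) :
    ∃ τ : Perm (Fin b), ∀ p, (g p).2 = τ p.2 := by
  choose τ hτ using hg
  have hsnd (p : Fin a × Fin b) : (g p).2 = τ p.2 := by
    have hp : g p ∈ g '' {q | q.2 = p.2} := ⟨p, rfl, rfl⟩
    rwa [hτ] at hp
  have hinj : Function.Injective τ := fun j₁ j₂ h => by
    have hmem : ((⟨0, ha⟩ : Fin a), j₁) ∈ {q : Fin a × Fin b | q.2 = j₂} := by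
      have himage : g '' {q | q.2 = j₁} = g '' {q | q.2 = j₂} := by rw [hτ, hτ, h]
      rw [← Set.image_injective.2 g.injective himage]
      rfl
    exact hmem
  exact ⟨Equiv.ofBijective τ (Finite.injective_iff_bijective.1 hinj), hsnd⟩

lemma ncard_eq_sum_card_section (A : Set (Fin a × Fin b)) [DecidablePred (· ∈ A)] :
    A.ncard = ∑ j, #{x | (x, j) ∈ A} := by
  rw [Set.ncard_eq_toFinset_card', Set.toFinset_card, Fintype.card_subtype, card_filter,
    Fintype.sum_prod_type_right]
  simp only [card_filter]

lemma NonSelfSep.exists_lt_card_section_add {A : Set (Fin a × Fin b)} [DecidablePred (· ∈ A)]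
    (hA : NonSelfSep (blockW a b) A) (σ : Perm (Fin b)) :
    ∃ j, a < #{x | (x, j) ∈ A} + #{x | (x, σ j) ∈ A} := by
  by_contra! h
  choose π hπ using fun j =>
    exists_perm_forall_apply_notMem _ _ ((h j).trans (Fintype.card_fin a).ge)
  obtain ⟨_, hpA, ⟨x, j⟩, hqA, rfl⟩ := hA ⟨blockPerm σ π, blockPerm_mem_blockW σ π⟩
  exact hπ j x (by simpa using hqA) (by simpa [blockPerm_apply] using hpA)

lemma mul_add_mul_le_sum_of_monotone {w : Fin b → ℕ} (hw : Monotone w) {i : Fin b}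
    (hi : i ≤ i.rev) : (i + 1) * w i.rev + (b - 2 * i - 1) * w i ≤ ∑ j, w j := by
  have hib : 2 * (i : ℕ) + 1 ≤ b := by rw [Fin.le_def, Fin.val_rev] at hi; omega
  have hdisj : Disjoint (Ici i.rev) (Ico i i.rev) :=
    disjoint_left.2 fun j hj hj' => (mem_Ico.1 hj').2.not_ge (mem_Ici.1 hj)
  calc (i + 1) * w i.rev + (b - 2 * i - 1) * w i
        = #(Ici i.rev) • w i.rev + #(Ico i i.rev) • w i := by
        simp only [Fin.card_Ici, Fin.card_Ico, Fin.val_rev, smul_eq_mul]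
        congr 2 <;> omega
    _ ≤ ∑ j ∈ Ici i.rev, w j + ∑ j ∈ Ico i i.rev, w j :=
        add_le_add (card_nsmul_le_sum _ _ _ fun j hj => hw (mem_Ici.1 hj))
          (card_nsmul_le_sum _ _ _ fun j hj => hw (mem_Ico.1 hj).1)
    _ = ∑ j ∈ Ici i.rev ∪ Ico i i.rev, w j := (sum_union hdisj).symm
    _ ≤ ∑ j, w j := sum_le_sum_of_subset (subset_univ _)

lemma exists_mul_add_mul_le_sum {s : Fin b → ℕ} (hs : ∀ j, s j ≤ a)
    (h : ∀ σ : Perm (Fin b), ∃ j, a < s j + s (σ j)) :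
    ∃ k m u v : ℕ, 1 ≤ k ∧ 2 * k + m = b + 1 ∧ v ≤ u ∧ u ≤ a ∧ a < u + v ∧
      k * u + m * v ≤ ∑ j, s j := by
  set ρ := Tuple.sort s
  have hw : Monotone (s ∘ ρ) := Tuple.monotone_sort s
  obtain ⟨j, hj⟩ := h (ρ * Fin.revPerm * ρ⁻¹)
  obtain ⟨i, hi, hlt⟩ : ∃ i : Fin b, i ≤ i.rev ∧ a < s (ρ i) + s (ρ i.rev) := by
    have hj' : a < s (ρ (ρ⁻¹ j)) + s (ρ (ρ⁻¹ j).rev) := by simpa using hj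
    rcases le_total (ρ⁻¹ j) (ρ⁻¹ j).rev with hle | hle
    · exact ⟨_, hle, hj'⟩
    · exact ⟨(ρ⁻¹ j).rev, by rwa [Fin.rev_rev], by rw [Fin.rev_rev]; omega⟩
  have hib : 2 * (i : ℕ) + 1 ≤ b := by rw [Fin.le_def, Fin.val_rev] at hi; omega
  refine ⟨i + 1, b - 2 * i - 1, s (ρ i.rev), s (ρ i), by omega, by omega, hw hi, hs _,
    by omega, ?_⟩
  calc _ ≤ ∑ j, (s ∘ ρ) j := mul_add_mul_le_sum_of_monotone hw hi
    _ = ∑ j, s j := Equiv.sum_comp ρ s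

lemma mWreath_le_mul_add_mul {k m u v : ℕ} (ha : 2 ≤ a) (hb : 2 ≤ b) (hk : 1 ≤ k)
    (hbm : 2 * k + m = b + 1) (hvu : v ≤ u) (hua : u ≤ a) (hauv : a < u + v) :
    mWreath a b ≤ k * u + m * v := by
  unfold mWreath
  rcases Nat.eq_zero_or_pos m with rfl | hm
  -- Here `b = 2k - 1` and, for `a ∈ {2t, 2t + 1}`, `u ≥ t + 1`; the bound reduces to
  -- `(k - 2)(t - 1) ≥ 0`, and for odd `a` to `(k - 2)(t - 1) ≥ 1`, failing iff `b = 3` or `a = 3`.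
  · have hbodd : Odd b := ⟨k - 1, by omega⟩
    have hk2 : 2 ≤ k := by omega
    obtain ⟨t, rfl | rfl⟩ := Nat.even_or_odd' a
    all_goals
      have ht : 1 ≤ t := by omega
      have hu : k * t + k ≤ k * u := by
        simpa [mul_add] using Nat.mul_le_mul_left k (show t + 1 ≤ u by omega)
      have hkt : 2 * t + k ≤ k * t + 2 := by nlinarith
    · split_ifs <;> omega
    · split_ifs with hexc
      · omega
      · have hk3 : 3 ≤ k := by
          by_contra
          exact hexc (Or.inr ⟨by omega, odd_two_mul_add_one t⟩)
        have ht2 : 2 ≤ t := by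
          by_contra
          exact hexc (Or.inl ⟨by omega, hbodd⟩)
        have : 2 * t + k + 1 ≤ k * t + 2 := by nlinarith
        omega
  · have : a + 2 * k + m ≤ k * u + m * v + 2 := by
      rcases ha.eq_or_lt with rfl | ha3
      · obtain rfl : u = 2 := by omega
        nlinarith
      rcases le_or_gt k m with hkm | hmk
      · nlinarith
      · nlinarith
    split_ifs <;> omega

lemma mWreath_le_ncard (ha : 2 ≤ a) (hb : 2 ≤ b) {A : Set (Fin a × Fin b)}
    (hA : NonSelfSep (blockW a b) A) : mWreath a b ≤ A.ncard := by
  classical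
  obtain ⟨k, m, u, v, hk, hbm, hvu, hua, hauv, hsum⟩ :=
    exists_mul_add_mul_le_sum (fun j => (card_le_univ _).trans_eq (Fintype.card_fin a))
      hA.exists_lt_card_section_add
  rw [ncard_eq_sum_card_section]
  exact (mWreath_le_mul_add_mul ha hb hk hbm hvu hua hauv).trans hsum

lemma nonSelfSep_block_union_line (x₀ : Fin a) (j₀ : Fin b) :
    NonSelfSep (blockW a b)
      ((univ ×ˢ {j₀} ∪ {x₀} ×ˢ univ : Finset (Fin a × Fin b)) : Set (Fin a × Fin b)) := by
  intro g
  obtain ⟨j', hj'⟩ := g.2 j₀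
  obtain ⟨q, hq, hgq⟩ : (x₀, j') ∈ (g : Perm (Fin a × Fin b)) '' {p | p.2 = j₀} := by
    rw [hj']
    rfl
  exact ⟨(x₀, j'), by simp, q, by simp [← show q.2 = j₀ from hq], hgq⟩

lemma card_block_union_line (x₀ : Fin a) (j₀ : Fin b) :
    #(univ ×ˢ {j₀} ∪ {x₀} ×ˢ univ : Finset (Fin a × Fin b)) = a + b - 1 := by
  have h := card_union_add_card_inter (univ ×ˢ {j₀} : Finset (Fin a × Fin b)) ({x₀} ×ˢ univ)
  rw [product_inter_product] at h
  simp only [univ_inter, inter_univ, card_product, card_univ, Fintype.card_fin, card_singleton]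
    at h
  omega

lemma nonSelfSep_product {P : Finset (Fin a)} {H : Finset (Fin b)} (hP : a < 2 * #P)
    (hH : b < 2 * #H) : NonSelfSep (blockW a b) (↑(P ×ˢ H) : Set (Fin a × Fin b)) := by
  intro g
  have ha : 0 < a := by have := P.card_le_univ; simp only [Fintype.card_fin] at this; omega
  obtain ⟨τ, hτ⟩ := exists_perm_snd_apply ha g.2
  obtain ⟨_, hj'⟩ := inter_nonempty_of_card_lt_card_add_card (subset_univ H)
    (subset_univ (H.map τ.toEmbedding))
    (by simp only [card_univ, Fintype.card_fin, card_map]; omega)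
  obtain ⟨hj'H, hj'τ⟩ := mem_inter.1 hj'
  obtain ⟨j, hjH, rfl⟩ := mem_map.1 hj'τ
  let f (x : Fin a) : Fin a := ((g : Perm (Fin a × Fin b)) (x, j)).1
  have hf : Function.Injective f := fun x y hxy => by
    have : (g : Perm (Fin a × Fin b)) (x, j) = (g : Perm (Fin a × Fin b)) (y, j) :=
      Prod.ext hxy (by rw [hτ, hτ])
    simpa using g.1.injective this
  obtain ⟨_, hy⟩ := inter_nonempty_of_card_lt_card_add_card (subset_univ P)
    (subset_univ (P.map ⟨f, hf⟩)) (by simp only [card_univ, Fintype.card_fin, card_map]; omega)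
  obtain ⟨hyP, hyf⟩ := mem_inter.1 hy
  obtain ⟨x, hxP, rfl⟩ := mem_map.1 hyf
  refine ⟨(g : Perm (Fin a × Fin b)) (x, j), ?_, (x, j), by simp [hxP, hjH], rfl⟩
  simpa [hτ] using And.intro hyP hj'H

lemma exists_nonSelfSep_ncard_eq_mul {c h : ℕ} (hca : c ≤ a) (hhb : h ≤ b) (hac : a < 2 * c)
    (hbh : b < 2 * h) : ∃ A : Set (Fin a × Fin b), A.ncard = c * h ∧ NonSelfSep (blockW a b) A := by
  obtain ⟨P, -, rfl⟩ := exists_subset_card_eq (s := (univ : Finset (Fin a))) (by simpa using hca)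
  obtain ⟨H, -, rfl⟩ := exists_subset_card_eq (s := (univ : Finset (Fin b))) (by simpa using hhb)
  exact ⟨_, by rw [Set.ncard_coe_finset, card_product], nonSelfSep_product hac hbh⟩

lemma exists_ncard_eq_mWreath (ha : 2 ≤ a) (hb : 2 ≤ b) :
    ∃ A : Set (Fin a × Fin b), A.ncard = mWreath a b ∧ NonSelfSep (blockW a b) A := by
  unfold mWreath
  split_ifs with hexc
  · rcases hexc with ⟨rfl, t, rfl⟩ | ⟨rfl, t, rfl⟩
    · obtain ⟨A, hA, hsep⟩ := exists_nonSelfSep_ncard_eq_mul (a := 3) (b := 2 * t + 1)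
        (c := 2) (h := t + 1) (by omega) (by omega) (by omega) (by omega)
      exact ⟨A, by omega, hsep⟩
    · obtain ⟨A, hA, hsep⟩ := exists_nonSelfSep_ncard_eq_mul (a := 2 * t + 1) (b := 3)
        (c := t + 1) (h := 2) (by omega) (by omega) (by omega) (by omega)
      exact ⟨A, by omega, hsep⟩
  · exact ⟨_, by rw [Set.ncard_coe_finset, card_block_union_line],
      nonSelfSep_block_union_line ⟨0, by omega⟩ ⟨0, by omega⟩⟩

theorem mParam_blockW (ha : 2 ≤ a) (hb : 2 ≤ b) :
    mParam (blockW a b) (Fin a × Fin b) = mWreath a b := by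
  obtain ⟨A, hA, hsep⟩ := exists_ncard_eq_mWreath ha hb
  refine le_antisymm (Nat.sInf_le ⟨A, hA, hsep⟩) (le_csInf ⟨_, A, hA, hsep⟩ ?_)
  rintro _ ⟨B, rfl, hB⟩
  exact mWreath_le_ncard ha hb hB

end

/-- For integers `a, b ≥ 2`, the imprimitive wreath product
`W = Sym(a) ≀ Sym(b)` acting on `ab` points satisfies `m(W) = a + b − 2` if
(`a = 3` and `b` is odd) or (`b = 3` and `a` is odd), and `m(W) = a + b − 1` otherwise. -/
theorem stmt11 (a b : ℕ) (ha : 2 ≤ a) (hb : 2 ≤ b) :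
    (((a = 3 ∧ Odd b) ∨ (b = 3 ∧ Odd a)) →
      mParam (blockW a b) (Fin a × Fin b) = a + b - 2) ∧
    (¬ ((a = 3 ∧ Odd b) ∨ (b = 3 ∧ Odd a)) →
      mParam (blockW a b) (Fin a × Fin b) = a + b - 1) := by
  rw [mParam_blockW ha hb, mWreath]
  exact ⟨fun h => if_pos h, fun h => if_neg h⟩
end

section
/- Let G be a group acting transitively on a finite set Ω with |Ω| ≥ 2, and suppose there is a partition of Ω into b ≥ 2 parts, each of cardinality a ≥ 2, such that every g ∈ G maps each part of the partition onto a part of the partition (i.e., the partition is a block system for G). Then m(G) ≤ a + b − 1. -/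
open Pointwise

/-- If `G` acts transitively on a finite set `Ω` (`|Ω| ≥ 2`) admitting a
block system with `b ≥ 2` blocks, each of cardinality `a ≥ 2`, then `m(G) ≤ a + b − 1`. -/
theorem stmt12 (G : Type*) [Group G] (Ω : Type*) [Fintype Ω]
    [MulAction G Ω] [MulAction.IsPretransitive G Ω] (h2 : 2 ≤ Fintype.card Ω)
    (ι : Type*) [Fintype ι] (a b : ℕ) (ha : 2 ≤ a) (hb : 2 ≤ b)
    (hι : Fintype.card ι = b) (B : ι → Set Ω)
    (hdisj : Pairwise (Function.onFun Disjoint B))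
    (hcover : ⋃ i, B i = Set.univ)
    (hcard : ∀ i, (B i).ncard = a)
    (hblock : ∀ (g : G) (i : ι), ∃ j, g • B i = B j) :
    mParam G Ω ≤ a + b - 1 := by
  -- ι is nonempty
  have hιne : Nonempty ι := by
    rw [← Fintype.card_pos_iff, hι]; omega
  obtain ⟨i₀⟩ := hιne
  -- choose a point in each block
  have hBne : ∀ i, (B i).Nonempty := by
    intro i
    rw [← Set.ncard_pos (Set.toFinite _), hcard]; omega
  choose x hx using hBne
  -- x is injective
  have hxinj : Function.Injective x := by
    intro i j hij
    by_contra hne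
    exact (hdisj hne).le_bot ⟨hx i, hij ▸ hx j⟩
  -- the candidate set
  set A : Set Ω := B i₀ ∪ x '' (Set.univ \ {i₀}) with hA
  have hdisjA : Disjoint (B i₀) (x '' (Set.univ \ {i₀})) := by
    rw [Set.disjoint_right]
    rintro _ ⟨i, ⟨-, hi⟩, rfl⟩ hmem
    exact (hdisj (by simpa using hi)).le_bot ⟨hx i, hmem⟩
  have hcardA : A.ncard = a + b - 1 := by
    rw [hA, Set.ncard_union_eq hdisjA (Set.toFinite _) (Set.toFinite _),
      Set.ncard_image_of_injective _ hxinj, hcard,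
      Set.ncard_diff (by simp) (Set.toFinite _), Set.ncard_univ, Set.ncard_singleton, Nat.card_eq_fintype_card, hι]
    omega
  have hNSS : NonSelfSep G A := by
    intro g
    obtain ⟨j, hj⟩ := hblock g i₀
    have hsub : B j ⊆ g • A := by
      rw [← hj]
      exact Set.smul_set_mono Set.subset_union_left
    have hxjA : x j ∈ A := by
      by_cases hji : j = i₀
      · exact Or.inl (hji ▸ hx j)
      · exact Or.inr ⟨j, ⟨trivial, hji⟩, rfl⟩
    exact ⟨x j, hxjA, hsub (hx j)⟩
  exact Nat.sInf_le ⟨A, hcardA, hNSS⟩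
end

section
/- Let 2 ≤ k < m be integers, and consider the actions of the symmetric group Sym(m) and (for m ≥ 3) of the alternating group Alt(m) on the set of all k-element subsets of {1, …, m}. Then m(Alt(m) acting on k-subsets) ≤ m(Sym(m) acting on k-subsets) ≤ C(m − ⌊k/2⌋, ⌈k/2⌉), where C(·,·) denotes the binomial coefficient. -/
open Pointwise

/-- The natural action of `Sym(m)` on the `k`-element subsets of `Fin m`. -/
instance kSubsetAction (m k : ℕ) :
    MulAction (Equiv.Perm (Fin m)) {s : Finset (Fin m) // s.card = k} where
  smul g s := ⟨g • s.1, by rw [Finset.card_smul_finset]; exact s.2⟩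
  one_smul s := Subtype.ext (one_smul _ s.1)
  mul_smul g h s := Subtype.ext (mul_smul g h s.1)

/-- For `2 ≤ k < m`, in the actions of `Sym(m)` and `Alt(m)` on
`k`-element subsets one has
`m(Alt(m)) ≤ m(Sym(m)) ≤ C(m − ⌊k/2⌋, ⌈k/2⌉)`. -/
theorem stmt13 (m k : ℕ) (hk : 2 ≤ k) (hkm : k < m) :
    mParam (alternatingGroup (Fin m)) {s : Finset (Fin m) // s.card = k}
      ≤ mParam (Equiv.Perm (Fin m)) {s : Finset (Fin m) // s.card = k} ∧
    mParam (Equiv.Perm (Fin m)) {s : Finset (Fin m) // s.card = k}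
      ≤ (m - k / 2).choose ((k + 1) / 2) := by
  set Ω := {s : Finset (Fin m) // s.card = k} with hΩ
  obtain ⟨F, -, hFcard⟩ := Finset.exists_subset_card_eq
    (show k / 2 ≤ (Finset.univ : Finset (Fin m)).card by
      simp only [Finset.card_univ, Fintype.card_fin]; omega)
  set A : Set Ω := {s | F ⊆ s.1} with hAdef
  have hNSS : NonSelfSep (Equiv.Perm (Fin m)) A := by
    intro g
    have hcardU : (F ∪ g • F).card ≤ k := by
      calc (F ∪ g • F).card ≤ F.card + (g • F).card := Finset.card_union_le _ _
        _ = k / 2 + k / 2 := by rw [Finset.card_smul_finset, hFcard]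
        _ ≤ k := by omega
    obtain ⟨t, hut, htcard⟩ := Finset.exists_superset_card_eq hcardU
      (by simp only [Finset.card_univ, Fintype.card_fin]; omega)
    refine ⟨⟨t, htcard⟩, fun x hx => hut (Finset.mem_union_left _ hx), ?_⟩
    refine ⟨g⁻¹ • (⟨t, htcard⟩ : Ω), ?_, smul_inv_smul g _⟩
    intro x hx
    show x ∈ g⁻¹ • t
    have h1 : g • x ∈ t := hut (Finset.mem_union_right _ (Finset.smul_mem_smul_finset hx))
    simpa using Finset.smul_mem_smul_finset (a := g⁻¹) h1
  have hAcard : A.ncard ≤ (m - k / 2).choose ((k + 1) / 2) := by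
    have hmain := Set.ncard_le_ncard_of_injOn (fun s : Ω => s.1 \ F)
      (s := A) (t := ↑(Fᶜ.powersetCard ((k + 1) / 2)))
      (fun s hs => by
        rw [Finset.mem_coe, Finset.mem_powersetCard]
        constructor
        · intro x hx
          rw [Finset.mem_compl]
          exact (Finset.mem_sdiff.mp hx).2
        · rw [Finset.card_sdiff_of_subset hs, s.2, hFcard]; omega)
      (fun s hs t ht h => by
        apply Subtype.ext
        have h1 : s.1 = s.1 \ F ∪ F := (Finset.sdiff_union_of_subset hs).symm
        have h2 : t.1 = t.1 \ F ∪ F := (Finset.sdiff_union_of_subset ht).symm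
        rw [h1, h2]
        simpa using congrArg (· ∪ F) h)
      (Finset.finite_toSet _)
    rwa [Set.ncard_coe_finset, Finset.card_powersetCard, Finset.card_compl,
      Fintype.card_fin, hFcard] at hmain
  have hSymMem : A.ncard ∈ {n | ∃ B : Set Ω, B.ncard = n ∧ NonSelfSep (Equiv.Perm (Fin m)) B} :=
    ⟨A, rfl, hNSS⟩
  constructor
  · obtain ⟨B, hB, hBnss⟩ := Nat.sInf_mem ⟨A.ncard, hSymMem⟩
    exact Nat.sInf_le ⟨B, hB, fun g => hBnss (g : Equiv.Perm (Fin m))⟩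
  · exact le_trans (Nat.sInf_le hSymMem) hAcard
end

section
/- Let G be a group acting transitively on a finite set Ω with |Ω| = n, and let k be an integer with 1 ≤ k ≤ ⌈n/2⌉ − 1. Suppose that for every two disjoint subsets A, B ⊆ Ω with |A| = |B| = k there exists g ∈ G with g • A = B. Then G is k-homogeneous: for every two subsets A, B ⊆ Ω with |A| = |B| = k there exists g ∈ G with g • A = B. -/
/-!
Any two `k`-sets are joined by a chain of `k`-sets in which consecutive members differ by
exchanging a single point. Two such neighbours `A`, `A'` have a union of size `k + 1`, so
when `2k + 1 ≤ n` some `k`-set `C` is disjoint from both, and `A ↦ C ↦ A'` is realised by two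
elements of `G`. Hence all `k`-sets lie in a single `G`-orbit.
-/

open Pointwise MulAction

namespace Set

variable {α : Type*}

theorem exists_exchange_ncard_sdiff_lt {A B : Set α} (hA : A.Finite) (hB : B.Finite)
    (hAB : A.ncard = B.ncard) (hne : A ≠ B) :
    ∃ A', A'.ncard = A.ncard ∧ (A ∪ A').ncard = A.ncard + 1 ∧
      (A' \ B).ncard < (A \ B).ncard := by
  obtain ⟨a, haA, haB⟩ : ∃ a ∈ A, a ∉ B := not_subset.mp fun hsub ↦
    hne (eq_of_subset_of_ncard_le hsub hAB.ge hB)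
  obtain ⟨b, hbB, hbA⟩ : ∃ b ∈ B, b ∉ A := not_subset.mp fun hsub ↦
    hne (eq_of_subset_of_ncard_le hsub hAB.le hA).symm
  refine ⟨insert b (A \ {a}), ncard_exchange hbA haA, ?_, ?_⟩
  · have hunion : A ∪ insert b (A \ {a}) = insert b A := by
      ext x
      simp only [mem_union, mem_insert_iff, mem_sdiff, mem_singleton_iff]
      tauto
    rw [hunion, ncard_insert_of_notMem hbA hA]
  · have hdiff : insert b (A \ {a}) \ B = (A \ B) \ {a} := by
      ext x
      simp only [mem_sdiff, mem_insert_iff, mem_singleton_iff]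
      grind
    rw [hdiff]
    exact ncard_sdiff_singleton_lt_of_mem ⟨haA, haB⟩ hA.sdiff

theorem exists_disjoint_ncard_eq [Finite α] (s : Set α) {k : ℕ}
    (hk : s.ncard + k ≤ Nat.card α) : ∃ t, Disjoint s t ∧ t.ncard = k := by
  obtain ⟨t, hts, htk⟩ := exists_subset_card_eq (s := sᶜ) (n := k)
    (by have := ncard_add_ncard_compl s; omega)
  exact ⟨t, disjoint_compl_right.mono_right hts, htk⟩

end Set

theorem mem_orbit_of_forall_disjoint_mem_orbit {G Ω : Type*} [Group G] [MulAction G Ω]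
    [Finite Ω] {k : ℕ} (hk : 2 * k + 1 ≤ Nat.card Ω)
    (h : ∀ A B : Set Ω, A.ncard = k → B.ncard = k → Disjoint A B → B ∈ orbit G A)
    {A B : Set Ω} (hA : A.ncard = k) (hB : B.ncard = k) : B ∈ orbit G A := by
  by_cases hAB : A = B
  · exact hAB ▸ mem_orbit_self A
  obtain ⟨A', hA', hAA', hdecr⟩ :=
    Set.exists_exchange_ncard_sdiff_lt A.toFinite B.toFinite (hA.trans hB.symm) hAB
  obtain ⟨C, hdisj, hC⟩ := Set.exists_disjoint_ncard_eq (A ∪ A') (k := k) (by omega)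
  have hCA : C ∈ orbit G A := h A C hA hC (hdisj.mono_left Set.subset_union_left)
  have hA'C : A' ∈ orbit G C :=
    h C A' hC (hA'.trans hA) (hdisj.mono_left Set.subset_union_right).symm
  have hBA' : B ∈ orbit G A' := mem_orbit_of_forall_disjoint_mem_orbit hk h (hA'.trans hA) hB
  rwa [orbit_eq_iff.mpr hA'C, orbit_eq_iff.mpr hCA] at hBA'
termination_by (A \ B).ncard

theorem stmt15_general (G : Type*) [Group G] (Ω : Type*) [Fintype Ω] [MulAction G Ω]
    (n k : ℕ) (hn : Fintype.card Ω = n)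
    (hk1 : 1 ≤ k) (hk2 : k ≤ (n + 1) / 2 - 1)
    (h : ∀ A B : Set Ω, A.ncard = k → B.ncard = k → Disjoint A B →
      ∃ g : G, g • A = B) :
    ∀ A B : Set Ω, A.ncard = k → B.ncard = k → ∃ g : G, g • A = B := by
  have hk : 2 * k + 1 ≤ Nat.card Ω := by rw [Nat.card_eq_fintype_card]; omega
  intro A B hA hB
  refine mem_orbit_iff.mp (mem_orbit_of_forall_disjoint_mem_orbit hk ?_ hA hB)
  exact fun A B hA hB hAB ↦ mem_orbit_iff.mpr (h A B hA hB hAB)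

/-- Let `G` act transitively on a finite set `Ω` with `|Ω| = n`, and let
`1 ≤ k ≤ ⌈n/2⌉ − 1`.  If every pair of disjoint `k`-subsets of `Ω` is related by an
element of `G`, then `G` is `k`-homogeneous: every pair of `k`-subsets is so related. -/
theorem stmt15 (G : Type*) [Group G] (Ω : Type*) [Fintype Ω] [MulAction G Ω]
    [MulAction.IsPretransitive G Ω] (n k : ℕ) (hn : Fintype.card Ω = n)
    (hk1 : 1 ≤ k) (hk2 : k ≤ (n + 1) / 2 - 1)
    (h : ∀ A B : Set Ω, A.ncard = k → B.ncard = k → Disjoint A B →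
      ∃ g : G, g • A = B) :
    ∀ A B : Set Ω, A.ncard = k → B.ncard = k → ∃ g : G, g • A = B :=
  stmt15_general G Ω n k hn hk1 hk2 h
end

section
/- Let Ω be a finite set of cardinality n ≥ 2 and let G be a finite group acting transitively on Ω. If n is even and every subset of Ω of cardinality n/2 is self-separable for G, then 2^{n/2} · |G| ≥ C(n, n/2). If n is odd and every subset of Ω of cardinality ⌊n/2⌋ is self-separable for G, then 2^{⌊n/2⌋} · n · |G| ≥ C(n, ⌊n/2⌋). Here C(·,·) denotes the binomial coefficient. -/
/-! For every `⌊n/2⌋`-subset `A` pick `g` with `A ∩ g • A = ∅`; the gap `F = Ω \ (A ∪ g • A)` then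
has `n - 2⌊n/2⌋ ∈ {0, 1}` elements. Given `g` and `F`, membership in `A` is propagated along the
cycles of `g` by `x ∈ A ↔ g • x ∉ A ∪ F`, so `A` is determined by one bit on each cycle of `g`
avoiding `F`. These cycles have length at least two (a fixed point outside `F` is impossible) and
lie in `Ω \ F`, so there are at most `⌊n/2⌋` of them, and at most `2^⌊n/2⌋` subsets `A` share the
same pair `(g, F)`; there are `|G| · C(n, n - 2⌊n/2⌋)` such pairs. -/

open Finset Pointwise

namespace Equiv.Perm

variable {Ω : Type*} [Fintype Ω] [DecidableEq Ω] {σ : Perm Ω} {A B F : Finset Ω} {x y : Ω}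

variable (σ) in
def SelfSeparatedWithGap (A F : Finset Ω) : Prop :=
  _root_.Disjoint A (A.image σ) ∧ (A ∪ A.image σ)ᶜ = F

namespace SelfSeparatedWithGap

theorem mem_iff (h : SelfSeparatedWithGap σ A F) (x : Ω) : x ∈ A ↔ σ x ∉ A ∧ σ x ∉ F := by
  have hσx : σ x ∈ A.image σ ↔ x ∈ A := by simp
  rw [← h.2, mem_compl, not_not, ← hσx, mem_union]
  have := fun hA : σ x ∈ A => disjoint_left.mp h.1 hA
  tauto

theorem disjoint_gap (h : SelfSeparatedWithGap σ A F) : _root_.Disjoint A F := by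
  rw [← h.2]
  exact disjoint_compl_right.mono_left subset_union_left

theorem mem_gap_of_apply_eq (h : SelfSeparatedWithGap σ A F) (hx : σ x = x) : x ∈ F := by
  have := h.mem_iff x
  rw [hx] at this
  tauto

theorem card_add_card (h : SelfSeparatedWithGap σ A F) : 2 * #A + #F = Fintype.card Ω := by
  rw [← h.2, card_compl, card_union_of_disjoint h.1, card_image_of_injective _ σ.injective]
  have := card_le_univ (A ∪ A.image σ)
  rw [card_union_of_disjoint h.1, card_image_of_injective _ σ.injective] at this
  omega

theorem mem_apply_iff_of_mem_iff (hA : SelfSeparatedWithGap σ A F)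
    (hB : SelfSeparatedWithGap σ B F) (hx : x ∈ A ↔ x ∈ B) : σ x ∈ A ↔ σ x ∈ B := by
  by_cases hF : σ x ∈ F
  · simp [disjoint_right.mp hA.disjoint_gap hF, disjoint_right.mp hB.disjoint_gap hF]
  · have := hA.mem_iff x
    have := hB.mem_iff x
    tauto

theorem mem_iff_of_sameCycle (hA : SelfSeparatedWithGap σ A F)
    (hB : SelfSeparatedWithGap σ B F) (hxy : σ.SameCycle x y) (hx : x ∈ A ↔ x ∈ B) :
    y ∈ A ↔ y ∈ B := by
  obtain ⟨i, rfl⟩ := hxy.exists_nat_pow_eq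
  clear hxy
  induction i with
  | zero => exact hx
  | succ i ih => rw [pow_succ', mul_apply]; exact hA.mem_apply_iff_of_mem_iff hB ih

end SelfSeparatedWithGap

open scoped Classical in
variable (σ) in
noncomputable def cyclesAvoiding (F : Finset Ω) : Finset (Quotient (SameCycle.setoid σ)) :=
  {q | ∀ y ∈ F, ¬ σ.SameCycle q.out y}

theorem notMem_of_mem_cyclesAvoiding {q : Quotient (SameCycle.setoid σ)}
    (hq : q ∈ cyclesAvoiding σ F) (hxy : σ.SameCycle q.out x) : x ∉ F := by
  simp only [cyclesAvoiding, mem_filter, mem_univ, true_and] at hq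
  exact fun hx => hq x hx hxy

theorem SelfSeparatedWithGap.two_mul_card_cyclesAvoiding_le (h : SelfSeparatedWithGap σ A F) :
    2 * #(cyclesAvoiding σ F) ≤ Fintype.card Ω - #F := by
  set C := cyclesAvoiding σ F
  let f : Quotient (SameCycle.setoid σ) × Bool → Ω := fun p => cond p.2 (σ p.1.out) p.1.out
  have hf : ∀ p, σ.SameCycle p.1.out (f p) := fun ⟨q, b⟩ => by
    cases b
    · exact SameCycle.rfl
    · exact sameCycle_apply_right.2 SameCycle.rfl
  have hfix : ∀ q ∈ C, σ q.out ≠ q.out := fun q hq hfix =>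
    notMem_of_mem_cyclesAvoiding hq SameCycle.rfl (h.mem_gap_of_apply_eq hfix)
  have hinj : Set.InjOn f ↑(C ×ˢ (univ : Finset Bool)) := by
    rintro ⟨q, b⟩ hqb ⟨q', b'⟩ hqb' heq
    simp only [mem_coe, mem_product, mem_univ, and_true] at hqb
    have hq : q = q' := Quotient.out_equiv_out.mp ((hf (q, b)).trans (heq ▸ (hf (q', b')).symm))
    subst hq
    cases b <;> cases b' <;> simp only [f, cond_true, cond_false] at heq
    · rfl
    · exact absurd heq.symm (hfix q hqb)
    · exact absurd heq (hfix q hqb)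
    · rfl
  calc 2 * #C = #(C ×ˢ (univ : Finset Bool)) := by simp [mul_comm]
    _ ≤ #Fᶜ := card_le_card_of_injOn f
        (fun p hp => mem_compl.2 (notMem_of_mem_cyclesAvoiding (mem_product.1 hp).1 (hf p)))
        hinj
    _ = Fintype.card Ω - #F := card_compl F

theorem SelfSeparatedWithGap.eq_of_forall_cyclesAvoiding (hA : SelfSeparatedWithGap σ A F)
    (hB : SelfSeparatedWithGap σ B F) (h : ∀ q ∈ cyclesAvoiding σ F, q.out ∈ A ↔ q.out ∈ B) :
    A = B := by
  ext x
  set q : Quotient (SameCycle.setoid σ) := ⟦x⟧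
  have hqx : σ.SameCycle q.out x := Quotient.mk_out (s := SameCycle.setoid σ) x
  by_cases hq : q ∈ cyclesAvoiding σ F
  · exact hA.mem_iff_of_sameCycle hB hqx (h q hq)
  · simp only [cyclesAvoiding, mem_filter, mem_univ, true_and, not_forall, not_not] at hq
    obtain ⟨y, hyF, hqy⟩ := hq
    refine hA.mem_iff_of_sameCycle hB (hqy.symm.trans hqx) ?_
    simp [disjoint_right.mp hA.disjoint_gap hyF, disjoint_right.mp hB.disjoint_gap hyF]

theorem card_le_of_forall_selfSeparatedWithGap (S : Finset (Finset Ω))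
    (hS : ∀ A ∈ S, SelfSeparatedWithGap σ A F) : #S ≤ 2 ^ ((Fintype.card Ω - #F) / 2) := by
  rcases S.eq_empty_or_nonempty with rfl | ⟨A₀, hA₀⟩
  · simp
  have hinj : Set.InjOn (fun A => (cyclesAvoiding σ F).filter (·.out ∈ A)) S :=
    fun A hA B hB hAB => (hS A hA).eq_of_forall_cyclesAvoiding (hS B hB) fun q hq => by
      simpa [hq] using congrArg (q ∈ ·) hAB
  calc #S ≤ #(cyclesAvoiding σ F).powerset :=
        card_le_card_of_injOn _ (fun A _ => mem_powerset.2 (filter_subset _ _)) hinj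
    _ = 2 ^ #(cyclesAvoiding σ F) := card_powerset _
    _ ≤ 2 ^ ((Fintype.card Ω - #F) / 2) := by
        have := (hS A₀ hA₀).two_mul_card_cyclesAvoiding_le
        exact Nat.pow_le_pow_right (by norm_num) (by omega)

end Equiv.Perm

section GroupAction

open Equiv.Perm MulAction

variable {G Ω : Type*} [Group G] [MulAction G Ω] [Fintype Ω] [DecidableEq Ω]

theorem selfSeparatedWithGap_toPerm {g : G} {A : Finset Ω} (h : Disjoint A (g • A)) :
    SelfSeparatedWithGap (toPerm g) A (A ∪ g • A)ᶜ :=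
  ⟨h, rfl⟩

theorem choose_le_of_forall_exists_disjoint_smul [Finite G] {k : ℕ}
    (hk : 2 * k ≤ Fintype.card Ω) (h : ∀ A : Finset Ω, #A = k → ∃ g : G, Disjoint A (g • A)) :
    (Fintype.card Ω).choose k
      ≤ 2 ^ k * (Fintype.card Ω).choose (Fintype.card Ω - 2 * k) * Nat.card G := by
  classical
  have : Fintype G := Fintype.ofFinite G
  choose g hg using fun A : Finset Ω =>
    if hA : #A = k then (h A hA).imp fun _ hg _ => hg else ⟨1, fun hA' => absurd hA' hA⟩
  let gap : Finset Ω → G × Finset Ω := fun A => (g A, (A ∪ g A • A)ᶜ)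
  have hmaps : ∀ A ∈ powersetCard k univ,
      gap A ∈ univ ×ˢ powersetCard (Fintype.card Ω - 2 * k) univ := fun A hA => by
    have hA := (mem_powersetCard.1 hA).2
    have := (selfSeparatedWithGap_toPerm (hg A hA)).card_add_card
    simp only [gap, mem_product, mem_univ, mem_powersetCard, subset_univ, true_and]
    omega
  have hfiber : ∀ b ∈ univ ×ˢ powersetCard (Fintype.card Ω - 2 * k) univ,
      #{A ∈ powersetCard k univ | gap A = b} ≤ 2 ^ k := by
    rintro ⟨g₀, F⟩ hF
    have hcard : #F = Fintype.card Ω - 2 * k := (mem_powersetCard.1 (mem_product.1 hF).2).2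
    calc _ ≤ 2 ^ ((Fintype.card Ω - #F) / 2) := by
          refine card_le_of_forall_selfSeparatedWithGap (σ := toPerm g₀) _ fun A hA => ?_
          obtain ⟨hAk, hgap⟩ := mem_filter.1 hA
          obtain ⟨rfl, rfl⟩ := Prod.mk.inj hgap
          exact selfSeparatedWithGap_toPerm (hg A (mem_powersetCard.1 hAk).2)
      _ = 2 ^ k := by congr 1; omega
  calc (Fintype.card Ω).choose k = #(powersetCard k (univ : Finset Ω)) := by simp
    _ ≤ 2 ^ k * #(univ ×ˢ powersetCard (Fintype.card Ω - 2 * k) (univ : Finset Ω)) :=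
        card_le_mul_card_image_of_maps_to hmaps _ hfiber
    _ = _ := by simp [card_product, Nat.card_eq_fintype_card]; ring

end GroupAction

theorem stmt17_general (G : Type*) [Group G] [Finite G] (Ω : Type*) [Fintype Ω]
    [MulAction G Ω]
    (n : ℕ) (hn : Fintype.card Ω = n) :
    (Even n → (∀ A : Set Ω, A.ncard = n / 2 → ∃ g : G, A ∩ g • A = ∅) →
      n.choose (n / 2) ≤ 2 ^ (n / 2) * Nat.card G) ∧
    (Odd n → (∀ A : Set Ω, A.ncard = n / 2 → ∃ g : G, A ∩ g • A = ∅) →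
      n.choose (n / 2) ≤ 2 ^ (n / 2) * n * Nat.card G) := by
  classical
  subst hn
  have hbound (hyp : ∀ A : Set Ω, A.ncard = Fintype.card Ω / 2 → ∃ g : G, A ∩ g • A = ∅) :=
    choose_le_of_forall_exists_disjoint_smul (Ω := Ω) (k := Fintype.card Ω / 2) (by omega)
      fun A hA =>
        (hyp A (by rw [Set.ncard_coe_finset, hA])).imp fun g hg => by
          rwa [← disjoint_coe, coe_smul_finset, Set.disjoint_iff_inter_eq_empty]
  refine ⟨fun heven hyp => ?_, fun hodd hyp => ?_⟩
  · have : Fintype.card Ω - 2 * (Fintype.card Ω / 2) = 0 := by rcases heven; omega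
    simpa [this] using hbound hyp
  · have : Fintype.card Ω - 2 * (Fintype.card Ω / 2) = 1 := by rcases hodd; omega
    simpa [this] using hbound hyp

/-- Let `G` be a finite group acting transitively on a finite set `Ω`
of cardinality `n ≥ 2`.  If `n` is even and every `(n/2)`-subset of `Ω` is
self-separable, then `2^{n/2} · |G| ≥ C(n, n/2)`; if `n` is odd and every
`⌊n/2⌋`-subset is self-separable, then `2^{⌊n/2⌋} · n · |G| ≥ C(n, ⌊n/2⌋)`. -/
theorem stmt17 (G : Type*) [Group G] [Finite G] (Ω : Type*) [Fintype Ω]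
    [MulAction G Ω] [MulAction.IsPretransitive G Ω]
    (n : ℕ) (hn : Fintype.card Ω = n) (h2 : 2 ≤ n) :
    (Even n → (∀ A : Set Ω, A.ncard = n / 2 → ∃ g : G, A ∩ g • A = ∅) →
      n.choose (n / 2) ≤ 2 ^ (n / 2) * Nat.card G) ∧
    (Odd n → (∀ A : Set Ω, A.ncard = n / 2 → ∃ g : G, A ∩ g • A = ∅) →
      n.choose (n / 2) ≤ 2 ^ (n / 2) * n * Nat.card G) :=
  stmt17_general G Ω n hn
end

section
/- Let G be a finite group acting transitively on a finite set Ω with |Ω| = n ≥ 2, and let A ⊆ Ω be a subset with 2 ≤ |A| ≤ n − 1 such that |A ∩ g • A| = 1 for every g ∈ G with g ≠ 1. Then |G| ≤ n. -/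
open Pointwise

/-- Let `G` be a finite group acting transitively on a finite set `Ω`
with `|Ω| = n ≥ 2`, and let `A ⊆ Ω` satisfy `2 ≤ |A| ≤ n − 1` and `|A ∩ g • A| = 1` for
every `g ≠ 1`.  Then `|G| ≤ n` (so `G` is regular). -/
theorem stmt19 (G : Type*) [Group G] [Finite G] (Ω : Type*) [Fintype Ω]
    [MulAction G Ω] [MulAction.IsPretransitive G Ω]
    (n : ℕ) (hn : Fintype.card Ω = n) (h2 : 2 ≤ n)
    (A : Set Ω) (hA1 : 2 ≤ A.ncard) (hA2 : A.ncard ≤ n - 1)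
    (hint : ∀ g : G, g ≠ 1 → (A ∩ g • A).ncard = 1) :
    Nat.card G ≤ n := by
  classical
  have : Fintype G := Fintype.ofFinite G
  -- cardinalities of pairwise intersections of translates
  have hcard : ∀ g h : G, ((g • A) ∩ (h • A)).ncard = if g = h then A.ncard else 1 := by
    intro g h
    have key : (g • A) ∩ (h • A) = g • (A ∩ (g⁻¹ * h) • A) := by
      rw [Set.smul_set_inter, smul_smul, mul_inv_cancel_left]
    by_cases hgh : g = h
    · subst hgh
      simp [Set.inter_self, Set.ncard_smul_set]
    · rw [key, Set.ncard_smul_set,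
        hint (g⁻¹ * h) (fun hc => hgh (inv_mul_eq_one.mp hc)), if_neg hgh]
  -- characteristic vectors of the translates
  set v : G → Ω → ℝ := fun g ω => if ω ∈ g • A then 1 else 0 with hv
  have hdot : ∀ g h : G,
      ∑ ω, v g ω * v h ω = (if g = h then (A.ncard : ℝ) else 1) := by
    intro g h
    have h1 : ∀ ω : Ω, v g ω * v h ω = if ω ∈ (g • A) ∩ (h • A) then (1:ℝ) else 0 := by
      intro ω
      by_cases m1 : ω ∈ g • A <;> by_cases m2 : ω ∈ h • A <;>
        simp [hv, m1, m2, Set.mem_inter_iff]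
    have h2' : (∑ ω : Ω, if ω ∈ (g • A) ∩ (h • A) then (1:ℝ) else 0)
        = (((g • A) ∩ (h • A)).ncard : ℝ) := by
      rw [Finset.sum_boole, Set.ncard_eq_toFinset_card']
      congr 1
      simp [Set.toFinset, Fintype.card_subtype, Set.mem_inter_iff]
    rw [Finset.sum_congr rfl fun ω _ => h1 ω, h2', hcard g h]
    split <;> simp
  have hKcast : (2:ℝ) ≤ (A.ncard : ℝ) := by exact_mod_cast hA1
  -- linear independence
  have hli : LinearIndependent ℝ v := by
    rw [Fintype.linearIndependent_iff]
    intro c hc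
    have hpt : ∀ ω : Ω, ∑ g, c g * v g ω = 0 := by
      intro ω
      have := congrFun hc ω
      simpa [Finset.sum_apply] using this
    -- the key equations
    have key : ∀ h : G, c h * ((A.ncard : ℝ) - 1) + (∑ g, c g) = 0 := by
      intro h
      have e1 : ∑ g, c g * (∑ ω, v g ω * v h ω) = 0 := by
        calc ∑ g, c g * ∑ ω, v g ω * v h ω
            = ∑ g, ∑ ω, c g * (v g ω * v h ω) := by simp [Finset.mul_sum]
          _ = ∑ ω, ∑ g, c g * (v g ω * v h ω) := Finset.sum_comm
          _ = ∑ ω, (∑ g, c g * v g ω) * v h ω := by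
              refine Finset.sum_congr rfl fun ω _ => ?_
              rw [Finset.sum_mul]
              exact Finset.sum_congr rfl fun g _ => (mul_assoc _ _ _).symm
          _ = 0 := by simp [hpt]
      rw [Finset.sum_congr rfl fun g _ => by rw [hdot g h]] at e1
      have e2 : ∀ g : G, (c g * if g = h then (A.ncard : ℝ) else 1)
          = (if g = h then c g * ((A.ncard : ℝ) - 1) else 0) + c g := by
        intro g; split <;> ring
      rw [Finset.sum_congr rfl fun g _ => e2 g, Finset.sum_add_distrib,
        Finset.sum_ite_eq' Finset.univ h] at e1
      simpa using e1
    -- sum the key equations over h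
    set S : ℝ := ∑ g, c g with hS
    have hmain : S * (((A.ncard : ℝ) - 1) + Fintype.card G) = 0 := by
      have e3 : (∑ h : G, (c h * ((A.ncard : ℝ) - 1) + S)) = 0 := by
        rw [Finset.sum_congr rfl fun h _ => key h]
        simp
      rw [Finset.sum_add_distrib, ← Finset.sum_mul, Finset.sum_const,
        Finset.card_univ, nsmul_eq_mul] at e3
      rw [mul_add]
      rw [← hS] at e3
      linarith [e3]
    have hpos : (0:ℝ) < ((A.ncard : ℝ) - 1) + Fintype.card G := by
      have : (1:ℝ) ≤ Fintype.card G := by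
        exact_mod_cast Fintype.card_pos
      linarith
    have hS0 : S = 0 := by
      rcases mul_eq_zero.mp hmain with h' | h'
      · exact h'
      · exact absurd h' (ne_of_gt hpos)
    intro i
    have := key i
    rw [hS0] at this
    have hne : (A.ncard : ℝ) - 1 ≠ 0 := by linarith
    have : c i * ((A.ncard : ℝ) - 1) = 0 := by linarith
    exact (mul_eq_zero.mp this).resolve_right hne
  have hfin := hli.fintype_card_le_finrank
  rw [Module.finrank_fintype_fun_eq_card, hn] at hfin
  rwa [Nat.card_eq_fintype_card]
end
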